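/- Fix s>0, N∈ℕ and c∈ℝ^N with |c_i|<1 for all i. Then the un-nested integral ∫_0^1 dt_1 ⋯ ∫_0^1 dt_N ∏_{i=1}^{N} t_i^{2s(N−i+1)−1}(1−t_i)^{2s−1}(1−c_i ∏_{j=1}^{i} t_j)^{−2s} equals the nested integral ∫_0^1 du_1 ∫_{u_1}^1 du_2 ⋯ ∫_{u_{N−1}}^1 du_N ∏_{i=1}^{N+1}(u_i−u_{i−1})^{2s−1} ∏_{i=1}^{N}(1−c_i(1−u_i))^{−2s}, with the conventions u_0=0 and u_{N+1}=1. -/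

import Mathlib

/-! The substitution `u_i = 1 - t_1 ⋯ t_i` maps the open cube `(0,1)^N` bijectively onto the open
simplex `0 < u_1 < ⋯ < u_N < 1`, and the boundaries of cube and simplex are null. Under it the
gaps become `u_i - u_{i-1} = t_1 ⋯ t_{i-1} (1 - t_i)` and `1 - u_N = t_1 ⋯ t_N`, while
`1 - c_i (1 - u_i) = 1 - c_i t_1 ⋯ t_i`; the Jacobian is lower triangular with
`|det| = ∏_i t_1 ⋯ t_{i-1}`. Collecting the powers of each `t_k` gives the un-nested integrand. -/

/-- The ordered simplex `{θ : ρ_l ≤ θ_1 ≤ θ_2 ≤ … ≤ θ_N ≤ ρ_r}`, the region of the nested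
integral `∫_{ρ_l}^{ρ_r}dθ_1 ∫_{θ_1}^{ρ_r}dθ_2 ⋯ ∫_{θ_{N−1}}^{ρ_r}dθ_N`. -/
def simplexSet (N : ℕ) (ρl ρr : ℝ) : Set (Fin N → ℝ) :=
  {θ | (∀ i j : Fin N, i ≤ j → θ i ≤ θ j) ∧ ∀ i, ρl ≤ θ i ∧ θ i ≤ ρr}

/-- The extended chain `(θ_0, θ_1, …, θ_N, θ_{N+1})` with the conventions `θ_0 = ρ_l`,
`θ_{N+1} = ρ_r`. -/
noncomputable def chainExt (ρl ρr : ℝ) {N : ℕ} (θ : Fin N → ℝ) : Fin (N + 2) → ℝ :=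
  Fin.snoc (Fin.cons ρl θ) ρr

/-- The product of the consecutive gaps: `∏_{i=1}^{N+1} (θ_i − θ_{i−1})^{2s−1}` with the
conventions `θ_0 = ρ_l`, `θ_{N+1} = ρ_r`. -/
noncomputable def gapProd (s ρl ρr : ℝ) {N : ℕ} (θ : Fin N → ℝ) : ℝ :=
  ∏ i : Fin (N + 1),
    (chainExt ρl ρr θ i.succ - chainExt ρl ρr θ i.castSucc) ^ (2 * s - 1)

open Finset MeasureTheory

namespace Fin

section CommMonoid

variable {M : Type*} [CommMonoid M] {n : ℕ}

theorem partialProd_eq_prod_filter (f : Fin n → M) (k : Fin (n + 1)) :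
    partialProd f k = ∏ j with j.castSucc < k, f j :=
  List.prod_take_ofFn f k

theorem partialProd_succ_eq_prod_Iic (f : Fin n → M) (i : Fin n) :
    partialProd f i.succ = ∏ j ∈ Iic i, f j := by
  rw [partialProd_eq_prod_filter]
  congr 1
  ext j
  simp [castSucc_lt_succ_iff]

theorem partialProd_castSucc_eq_prod_Iio (f : Fin n → M) (i : Fin n) :
    partialProd f i.castSucc = ∏ j ∈ Iio i, f j := by
  rw [partialProd_eq_prod_filter]
  congr 1
  ext j
  simp

theorem partialProd_last (f : Fin n → M) : partialProd f (last n) = ∏ j, f j := by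
  rw [partialProd_eq_prod_filter]
  congr 1
  ext j
  simp [castSucc_lt_last]

theorem prod_prod_Iio_eq_prod_pow (f : Fin n → M) :
    ∏ i, ∏ j ∈ Iio i, f j = ∏ j, f j ^ (n - 1 - (j : ℕ)) := by
  rw [prod_comm' (t' := univ) (s' := Ioi) (by simp)]
  simp [card_Ioi]

end CommMonoid

section OrderedSemiring

variable {R : Type*} [CommSemiring R] [PartialOrder R] [IsStrictOrderedRing R] {n : ℕ}

theorem partialProd_pos {f : Fin n → R} (hf : ∀ i, 0 < f i) (k : Fin (n + 1)) :
    0 < partialProd f k := by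
  rw [partialProd_eq_prod_filter]
  exact prod_pos fun j _ => hf j

theorem partialProd_nonneg {f : Fin n → R} (hf : ∀ i, 0 ≤ f i) (k : Fin (n + 1)) :
    0 ≤ partialProd f k := by
  rw [partialProd_eq_prod_filter]
  exact prod_nonneg fun j _ => hf j

theorem partialProd_antitone {f : Fin n → R} (hf₀ : ∀ i, 0 ≤ f i) (hf₁ : ∀ i, f i ≤ 1) :
    Antitone (partialProd f) := by
  refine antitone_iff_succ_le.2 fun i => ?_
  rw [partialProd_succ]
  exact mul_le_of_le_one_right (partialProd_nonneg hf₀ _) (hf₁ i)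

end OrderedSemiring

end Fin

namespace MeasureTheory

theorem ae_eq_of_subset_of_diff_subset {α : Type*} [MeasurableSpace α] {μ : Measure α}
    {s t D : Set α} (hts : t ⊆ s) (hsD : s \ D ⊆ t) (hD : μ D = 0) : s =ᵐ[μ] t :=
  ae_eq_set.2 ⟨measure_mono_null (Set.sdiff_subset_comm.1 hsD) hD,
    by rw [Set.sdiff_eq_empty.2 hts, measure_empty]⟩

theorem volume_setOf_apply_eq {ι : Type*} [Fintype ι] (i : ι) (a : ℝ) :
    volume {u : ι → ℝ | u i = a} = 0 := by
  rw [volume_pi]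
  exact Measure.pi_hyperplane (fun _ : ι => (volume : Measure ℝ)) i a

theorem volume_setOf_apply_eq_apply {ι : Type*} [Fintype ι] {i j : ι} (hij : i ≠ j) :
    volume {u : ι → ℝ | u i = u j} = 0 := by
  classical
  let L : (ι → ℝ) →ₗ[ℝ] ℝ := LinearMap.proj (R := ℝ) (φ := fun _ => ℝ) i - LinearMap.proj j
  have hker : {u : ι → ℝ | u i = u j} = (LinearMap.ker L : Set (ι → ℝ)) := by
    ext u
    simp [L, sub_eq_zero]
  rw [hker]
  refine Measure.addHaar_submodule _ _ fun htop => ?_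
  have hmem : Pi.single i (1 : ℝ) ∈ LinearMap.ker L := htop ▸ Submodule.mem_top
  simp [L, Pi.single_eq_of_ne hij.symm] at hmem

end MeasureTheory

namespace UnnestedIntegral

variable {N : ℕ}

def openCube (N : ℕ) : Set (Fin N → ℝ) := Set.univ.pi fun _ => Set.Ioo 0 1

def cubeToSimplex (t : Fin N → ℝ) (i : Fin N) : ℝ := 1 - Fin.partialProd t i.succ

theorem cons_zero_cubeToSimplex (t : Fin N → ℝ) (k : Fin (N + 1)) :
    (Fin.cons 0 (cubeToSimplex t) : Fin (N + 1) → ℝ) k = 1 - Fin.partialProd t k := by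
  cases k using Fin.cases <;> simp [cubeToSimplex]

theorem injOn_cubeToSimplex : Set.InjOn (cubeToSimplex (N := N)) (openCube N) := by
  intro t ht t' ht' h
  have hP : Fin.partialProd t = Fin.partialProd t' := by
    funext k
    have := congrArg (fun u => (Fin.cons 0 u : Fin (N + 1) → ℝ) k) h
    simpa only [cons_zero_cubeToSimplex, sub_right_inj] using this
  funext i
  have hpos : 0 < Fin.partialProd t i.castSucc :=
    Fin.partialProd_pos (fun j => (ht j trivial).1) _
  refine mul_left_cancel₀ hpos.ne' ?_
  rw [← Fin.partialProd_succ, hP, Fin.partialProd_succ]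

theorem image_cubeToSimplex_subset : cubeToSimplex '' openCube N ⊆ simplexSet N 0 1 := by
  rintro _ ⟨t, ht, rfl⟩
  have ht₀ : ∀ i, 0 ≤ t i := fun i => (ht i trivial).1.le
  have hanti := Fin.partialProd_antitone ht₀ fun i => (ht i trivial).2.le
  refine ⟨fun i j hij => ?_, fun i => ⟨?_, ?_⟩⟩ <;> simp only [cubeToSimplex]
  · linarith [hanti (Fin.succ_le_succ_iff.2 hij)]
  · linarith [hanti (Fin.zero_le i.succ), Fin.partialProd_zero t]
  · linarith [Fin.partialProd_nonneg ht₀ i.succ]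

/-- Off this null set the closed cube and the closed simplex coincide with their interiors. -/
def degenerate (N : ℕ) : Set (Fin N → ℝ) :=
  ⋃ i, ({u | u i = 0} ∪ {u | u i = 1} ∪ ⋃ j ≠ i, {u | u j = u i})

theorem notMem_degenerate_iff {u : Fin N → ℝ} :
    u ∉ degenerate N ↔ ∀ i, (u i ≠ 0 ∧ u i ≠ 1) ∧ ∀ j, j ≠ i → u j ≠ u i := by
  simp [degenerate]

theorem volume_degenerate : volume (degenerate N) = 0 :=
  measure_iUnion_null fun i => measure_union_null
    (measure_union_null (volume_setOf_apply_eq i 0) (volume_setOf_apply_eq i 1))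
    (measure_biUnion_null_iff (Set.to_countable _) |>.2 fun _ hj => volume_setOf_apply_eq_apply hj)

theorem pi_Icc_ae_eq_openCube :
    (Set.univ.pi fun _ : Fin N => Set.Icc (0 : ℝ) 1) =ᵐ[volume] openCube N := by
  refine ae_eq_of_subset_of_diff_subset (Set.pi_mono fun _ _ => Set.Ioo_subset_Icc_self)
    (fun t ⟨ht, hdeg⟩ i _ => ?_) volume_degenerate
  rw [notMem_degenerate_iff] at hdeg
  exact ⟨lt_of_le_of_ne (ht i trivial).1 (Ne.symm (hdeg i).1.1),
    lt_of_le_of_ne (ht i trivial).2 (hdeg i).1.2⟩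

theorem simplexSet_diff_degenerate_subset_image :
    simplexSet N 0 1 \ degenerate N ⊆ cubeToSimplex '' openCube N := by
  rintro u ⟨⟨hmono, hbd⟩, hdeg⟩
  rw [notMem_degenerate_iff] at hdeg
  have hlt : ∀ i, (Fin.cons 0 u : Fin (N + 1) → ℝ) i.castSucc < u i := by
    intro i
    rcases Fin.eq_zero_or_eq_succ i.castSucc with h | ⟨j, h⟩ <;> rw [h]
    · exact lt_of_le_of_ne (hbd i).1 (Ne.symm (hdeg i).1.1)
    · have hji : j < i := by
        have := congrArg Fin.val h
        simp only [Fin.val_castSucc, Fin.val_succ] at this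
        exact Fin.lt_def.2 (by omega)
      exact lt_of_le_of_ne (hmono j i hji.le) ((hdeg i).2 j hji.ne)
  set a : Fin (N + 1) → ℝ := fun k => 1 - (Fin.cons 0 u : Fin (N + 1) → ℝ) k
  have ha_pos : ∀ k, 0 < a k := by
    intro k
    cases k using Fin.cases
    · simp [a]
    · simpa [a] using lt_of_le_of_ne (hbd _).2 (hdeg _).1.2
  have hPa : Fin.partialProd (fun i => a i.succ / a i.castSucc) = a := by
    funext k
    induction k using Fin.induction with
    | zero => simp [a]
    | succ i ih => rw [Fin.partialProd_succ, ih, mul_div_cancel₀ _ (ha_pos _).ne']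
  refine ⟨fun i => a i.succ / a i.castSucc, fun i _ => ⟨div_pos (ha_pos _) (ha_pos _), ?_⟩, ?_⟩
  · rw [div_lt_one (ha_pos _)]
    simpa [a] using hlt i
  · funext i
    rw [cubeToSimplex, hPa]
    simp only [a, Fin.cons_succ, sub_sub_cancel]

theorem simplexSet_ae_eq_image : simplexSet N 0 1 =ᵐ[volume] cubeToSimplex '' openCube N :=
  ae_eq_of_subset_of_diff_subset image_cubeToSimplex_subset
    simplexSet_diff_degenerate_subset_image volume_degenerate

def cubeToSimplexDeriv (t : Fin N → ℝ) : (Fin N → ℝ) →L[ℝ] (Fin N → ℝ) :=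
  ContinuousLinearMap.pi fun i =>
    -∑ j ∈ Iic i, (∏ k ∈ (Iic i).erase j, t k) • ContinuousLinearMap.proj j

theorem hasFDerivAt_cubeToSimplex (t : Fin N → ℝ) :
    HasFDerivAt cubeToSimplex (cubeToSimplexDeriv t) t := by
  have h : cubeToSimplex = fun (t : Fin N → ℝ) i => 1 - ∏ j ∈ Iic i, t j := by
    funext t i
    rw [cubeToSimplex, Fin.partialProd_succ_eq_prod_Iic]
  rw [h]
  refine hasFDerivAt_pi.2 fun i => ?_
  exact (hasFDerivAt_finsetProd (u := Iic i) (x := t) (𝕜 := ℝ)).const_sub 1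

theorem det_cubeToSimplexDeriv (t : Fin N → ℝ) :
    (cubeToSimplexDeriv t).det = ∏ i : Fin N, -Fin.partialProd t i.castSucc := by
  let A : Matrix (Fin N) (Fin N) ℝ :=
    Matrix.of fun i j => -if j ≤ i then ∏ k ∈ (Iic i).erase j, t k else 0
  have hA : LinearMap.toMatrix (Pi.basisFun ℝ (Fin N)) (Pi.basisFun ℝ (Fin N))
      (cubeToSimplexDeriv t : (Fin N → ℝ) →ₗ[ℝ] (Fin N → ℝ)) = A := by
    ext i j
    rw [LinearMap.toMatrix_apply]
    simp [A, cubeToSimplexDeriv, Pi.single_apply]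
  rw [ContinuousLinearMap.det, ← LinearMap.det_toMatrix (Pi.basisFun ℝ (Fin N)), hA,
    Matrix.det_of_isLowerTriangular]
  · simp [A, Fin.partialProd_castSucc_eq_prod_Iio, Iic_erase]
  · intro i j (hij : i < j)
    simp [A, not_le.2 hij]

theorem gapProd_cubeToSimplex (s : ℝ) (t : Fin N → ℝ) :
    gapProd s 0 1 (cubeToSimplex t) =
      (∏ i, (Fin.partialProd t i.castSucc * (1 - t i)) ^ (2 * s - 1)) *
        Fin.partialProd t (Fin.last N) ^ (2 * s - 1) := by
  rw [gapProd, Fin.prod_univ_castSucc]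
  simp only [chainExt, Fin.succ_castSucc, Fin.snoc_castSucc, Fin.succ_last, Fin.snoc_last,
    cons_zero_cubeToSimplex, Fin.partialProd_succ, sub_sub_sub_cancel_left, sub_sub_cancel]
  congr 1
  refine prod_congr rfl fun i _ => ?_
  congr 1
  ring

theorem prod_partialProd_rpow {t : Fin N → ℝ} (ht : ∀ i, 0 < t i) (a b : ℝ) :
    (∏ i : Fin N, Fin.partialProd t i.castSucc ^ a) * Fin.partialProd t (Fin.last N) ^ b =
      ∏ k : Fin N, t k ^ (a * ((N : ℝ) - 1 - (k : ℕ)) + b) := by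
  simp only [Fin.partialProd_castSucc_eq_prod_Iio, Fin.partialProd_last,
    ← Real.finsetProd_rpow _ _ fun k _ => (ht k).le,
    Fin.prod_prod_Iio_eq_prod_pow, ← prod_mul_distrib]
  refine prod_congr rfl fun k _ => ?_
  rw [← Real.rpow_natCast, ← Real.rpow_mul (ht k).le, ← Real.rpow_add (ht k), Nat.sub_sub,
    Nat.cast_sub (by omega)]
  push_cast
  ring_nf

theorem abs_det_mul_integrand_cubeToSimplex (s : ℝ) (c t : Fin N → ℝ) (ht : t ∈ openCube N) :
    |(cubeToSimplexDeriv t).det| • (gapProd s 0 1 (cubeToSimplex t) *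
        ∏ i, (1 - c i * (1 - cubeToSimplex t i)) ^ (-(2 * s))) =
      ∏ i : Fin N, (t i ^ (2 * s * ((N : ℝ) - (i : ℕ)) - 1) * (1 - t i) ^ (2 * s - 1) *
        (1 - c i * ∏ j : Fin N, (if j ≤ i then t j else 1)) ^ (-(2 * s))) := by
  have ht₀ : ∀ i, 0 < t i := fun i => (ht i trivial).1
  have hP : ∀ k, 0 < Fin.partialProd t k := Fin.partialProd_pos ht₀
  have hprefix :
      ∀ i : Fin N, ∏ j : Fin N, (if j ≤ i then t j else 1) = Fin.partialProd t i.succ := by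
    intro i
    rw [← prod_filter, Fin.partialProd_succ_eq_prod_Iic]
    congr 1
    ext j
    simp
  have hgap : ∀ i : Fin N, (Fin.partialProd t i.castSucc * (1 - t i)) ^ (2 * s - 1) =
      Fin.partialProd t i.castSucc ^ (2 * s - 1) * (1 - t i) ^ (2 * s - 1) :=
    fun i => Real.mul_rpow (hP _).le (by linarith [(ht i trivial).2])
  have hdiag : ∀ i : Fin N, Fin.partialProd t i.castSucc ^ (2 * s) =
      Fin.partialProd t i.castSucc ^ (2 * s - 1) * Fin.partialProd t i.castSucc := fun i => by
    rw [← Real.rpow_add_one (hP _).ne', sub_add_cancel]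
  calc _ = ((∏ i : Fin N, Fin.partialProd t i.castSucc ^ (2 * s)) *
          Fin.partialProd t (Fin.last N) ^ (2 * s - 1)) *
        ∏ i, ((1 - t i) ^ (2 * s - 1) * (1 - c i * Fin.partialProd t i.succ) ^ (-(2 * s))) := by
        simp only [det_cubeToSimplexDeriv, gapProd_cubeToSimplex, hgap, hdiag, abs_prod, abs_neg,
          abs_of_pos (hP _), cubeToSimplex, sub_sub_cancel, prod_mul_distrib, smul_eq_mul]
        ring
    _ = _ := by
        rw [prod_partialProd_rpow ht₀, ← prod_mul_distrib]
        refine prod_congr rfl fun i _ => ?_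
        rw [hprefix, mul_assoc]
        ring_nf

end UnnestedIntegral

open UnnestedIntegral

theorem unnested_integral_eq_nested_integral_general (s : ℝ) (N : ℕ) (c : Fin N → ℝ) :
    (∫ t in Set.univ.pi (fun _ : Fin N => Set.Icc (0 : ℝ) 1),
        ∏ i : Fin N,
          (t i ^ (2 * s * ((N : ℝ) - (i : ℕ)) - 1) * (1 - t i) ^ (2 * s - 1)
            * (1 - c i * ∏ j : Fin N, (if j ≤ i then t j else 1)) ^ (-(2 * s))))
      = ∫ u in simplexSet N 0 1,
          gapProd s 0 1 u * ∏ i : Fin N, (1 - c i * (1 - u i)) ^ (-(2 * s)) := by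
  have hcube : MeasurableSet (openCube N) := MeasurableSet.univ_pi fun _ => measurableSet_Ioo
  rw [setIntegral_congr_set pi_Icc_ae_eq_openCube, setIntegral_congr_set simplexSet_ae_eq_image,
    integral_image_eq_integral_abs_det_fderiv_smul volume hcube
      (fun t _ => (hasFDerivAt_cubeToSimplex t).hasFDerivWithinAt) injOn_cubeToSimplex]
  exact setIntegral_congr_fun hcube fun t ht => (abs_det_mul_integrand_cubeToSimplex s c t ht).symm

/-- Equality of the un-nested integral over `[0,1]^N` and the nested integral over the ordered
simplex `0 ≤ u_1 ≤ … ≤ u_N ≤ 1` (with conventions `u_0 = 0`, `u_{N+1} = 1`):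
`∫_{[0,1]^N} ∏_i t_i^{2s(N−i+1)−1}(1−t_i)^{2s−1}(1−c_i∏_{j=1}^i t_j)^{−2s} dt
= ∫ ∏_{i=1}^{N+1}(u_i−u_{i−1})^{2s−1} ∏_i (1−c_i(1−u_i))^{−2s} du`
(here `i, j : Fin N` are 0-based, so the paper's exponent `2s(N−i+1)−1` becomes `2s(N−i)−1`). -/
theorem unnested_integral_eq_nested_integral (s : ℝ) (hs : 0 < s) (N : ℕ) (c : Fin N → ℝ)
    (hc : ∀ i, |c i| < 1) :
    (∫ t in Set.univ.pi (fun _ : Fin N => Set.Icc (0 : ℝ) 1),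
        ∏ i : Fin N,
          (t i ^ (2 * s * ((N : ℝ) - (i : ℕ)) - 1) * (1 - t i) ^ (2 * s - 1)
            * (1 - c i * ∏ j : Fin N, (if j ≤ i then t j else 1)) ^ (-(2 * s))))
      = ∫ u in simplexSet N 0 1,
          gapProd s 0 1 u * ∏ i : Fin N, (1 - c i * (1 - u i)) ^ (-(2 * s)) :=
  unnested_integral_eq_nested_integral_general s N c
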